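/- arXiv:1406.6985 — 5 statements merged into one kernel-verified Lean document; each statement's English description precedes it below -/
import Mathlib

section
/- Let P_1,...,P_k be q-dimensional polyhedral convex sets in R^q and suppose a point y lies in the interior of the union ∪_{i=1}^k P_i. If P is another q-dimensional polyhedral convex set such that P ∩ P_i is a proper face of P for every i = 1,...,k, then y ∉ P. -/
open scoped RealInnerProductSpace

/-- `F` is a face of the convex set `P`. -/
def IsFace {q : ℕ} (P F : Set (EuclideanSpace ℝ (Fin q))) : Prop :=
  F ⊆ P ∧ Convex ℝ F ∧
    ∀ x ∈ P, ∀ y ∈ P, ∀ t : ℝ, 0 < t → t < 1 → t • x + (1 - t) • y ∈ F → x ∈ F ∧ y ∈ F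

/-- `F` is a proper face of `P`: a nonempty face different from `P`. -/
def IsProperFace {q : ℕ} (P F : Set (EuclideanSpace ℝ (Fin q))) : Prop :=
  IsFace P F ∧ F.Nonempty ∧ F ≠ P

/-- A polyhedral convex set: a finite intersection of closed halfspaces. -/
def IsPolyhedral {q : ℕ} (P : Set (EuclideanSpace ℝ (Fin q))) : Prop :=
  ∃ H : Finset (EuclideanSpace ℝ (Fin q) × ℝ), P = {x | ∀ p ∈ H, ⟪p.1, x⟫ ≤ p.2}

/-- A polyhedral subdivision of `ℝ^q`: a finite family of full-dimensional
(`q`-dimensional) polyhedral convex sets covering `ℝ^q`, any two distinct members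
of which intersect in the empty set or in a common proper face. -/
def IsPolyhedralSubdivision {q : ℕ} (𝒞 : Set (Set (EuclideanSpace ℝ (Fin q)))) : Prop :=
  𝒞.Finite ∧
    (∀ P ∈ 𝒞, IsPolyhedral P ∧ (interior P).Nonempty) ∧
    ⋃₀ 𝒞 = Set.univ ∧
    ∀ P ∈ 𝒞, ∀ Q ∈ 𝒞, P ≠ Q →
      P ∩ Q = ∅ ∨ (IsProperFace P (P ∩ Q) ∧ IsProperFace Q (P ∩ Q))

/-!
Since `Q` is convex with nonempty interior, `y ∈ Q` is a limit of interior points of `Q`, so some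
interior point `z` of `Q` lies in the neighbourhood `⋃ i, P i` of `y`, say `z ∈ P i`. A face
containing an interior point is the whole set, hence `Q ∩ P i = Q`, contradicting properness.
-/

open Set Topology AffineMap

lemma IsPolyhedral.convex {q : ℕ} {P : Set (EuclideanSpace ℝ (Fin q))}
    (h : IsPolyhedral P) : Convex ℝ P := by
  obtain ⟨H, rfl⟩ := h
  simp only [ofPred_forall]
  exact convex_iInter₂ fun p _ ↦ convex_halfSpace_le (innerₛₗ ℝ p.1).isLinear p.2

lemma IsFace.isExtreme {q : ℕ} {P F : Set (EuclideanSpace ℝ (Fin q))} (h : IsFace P F) :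
    IsExtreme ℝ P F := by
  refine ⟨h.1, fun x hx y hy z hz ⟨a, b, ha, hb, hab, hxyz⟩ ↦ ?_⟩
  obtain rfl : b = 1 - a := by linarith
  exact (h.2.2 x hx y hy a ha (by linarith) (hxyz ▸ hz)).1

section TopologicalVectorSpace

variable {E : Type*} [AddCommGroup E] [Module ℝ E] [TopologicalSpace E]
  [IsTopologicalAddGroup E] [ContinuousSMul ℝ E]

/-- Prolong the segment from `p` through the interior point `z` slightly beyond `z`. -/
lemma exists_mem_openSegment_of_mem_interior {s : Set E} {z : E} (hz : z ∈ interior s) (p : E) :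
    ∃ w ∈ s, z ∈ openSegment ℝ p w := by
  have hmem : ∀ᶠ t : ℝ in 𝓝[>] 1, lineMap p z t ∈ s :=
    lineMap_continuous.continuousWithinAt.eventually_mem
      (by simpa using mem_interior_iff_mem_nhds.1 hz)
  obtain ⟨t, hts, ht⟩ := (hmem.and self_mem_nhdsWithin).exists
  have ht0 : (0 : ℝ) < t := zero_lt_one.trans ht
  refine ⟨lineMap p z t, hts, 1 - t⁻¹, t⁻¹, by simpa using inv_lt_one_of_one_lt₀ ht,
    inv_pos.2 ht0, by ring, ?_⟩
  rw [lineMap_apply_module']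
  match_scalars <;> field_simp; ring

lemma IsExtreme.eq_of_mem_interior {A B : Set E} (h : IsExtreme ℝ A B) {z : E}
    (hzA : z ∈ interior A) (hzB : z ∈ B) : B = A := by
  refine h.subset.antisymm fun p hp ↦ ?_
  obtain ⟨w, hw, hzpw⟩ := exists_mem_openSegment_of_mem_interior hzA p
  exact h.left_mem_of_mem_openSegment hp hw hzB hzpw

lemma Convex.inter_interior_nonempty_of_mem_nhds {s U : Set E} (hs : Convex ℝ s)
    (hs' : (interior s).Nonempty) {y : E} (hy : y ∈ s) (hU : U ∈ 𝓝 y) :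
    (U ∩ interior s).Nonempty := by
  have : y ∈ closure (interior s) := by
    rw [hs.closure_interior_eq_closure_of_nonempty_interior hs']
    exact subset_closure hy
  exact mem_closure_iff_nhds.1 this U hU

end TopologicalVectorSpace

theorem not_mem_of_inter_proper_faces_general {q k : ℕ}
    (P : Fin k → Set (EuclideanSpace ℝ (Fin q)))
    (y : EuclideanSpace ℝ (Fin q)) (hy : y ∈ interior (⋃ i, P i))
    (Q : Set (EuclideanSpace ℝ (Fin q)))
    (hQ : IsPolyhedral Q ∧ (interior Q).Nonempty)
    (hface : ∀ i, IsProperFace Q (Q ∩ P i)) :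
    y ∉ Q := by
  intro hyQ
  obtain ⟨z, hzP, hzQ⟩ := hQ.1.convex.inter_interior_nonempty_of_mem_nhds hQ.2 hyQ
    (mem_interior_iff_mem_nhds.1 hy)
  obtain ⟨i, hzPi⟩ := mem_iUnion.1 hzP
  exact (hface i).2.2 <|
    (hface i).1.isExtreme.eq_of_mem_interior hzQ ⟨interior_subset hzQ, hzPi⟩

/-- let `P 1, …, P k` be full-dimensional (`q`-dimensional) polyhedral
convex sets in `ℝ^q` and suppose `y` lies in the interior of their union. If `Q` is
another full-dimensional polyhedral convex set such that `Q ∩ P i` is a proper face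
of `Q` for every `i`, then `y ∉ Q`. -/
theorem not_mem_of_inter_proper_faces {q k : ℕ}
    (P : Fin k → Set (EuclideanSpace ℝ (Fin q)))
    (hP : ∀ i, IsPolyhedral (P i) ∧ (interior (P i)).Nonempty)
    (y : EuclideanSpace ℝ (Fin q)) (hy : y ∈ interior (⋃ i, P i))
    (Q : Set (EuclideanSpace ℝ (Fin q)))
    (hQ : IsPolyhedral Q ∧ (interior Q).Nonempty)
    (hface : ∀ i, IsProperFace Q (Q ∩ P i)) :
    y ∉ Q :=
  not_mem_of_inter_proper_faces_general P y hy Q hQ hface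
end

section
/- Let S ⊂ R^q be a polyhedral convex set, x_0 ∈ S, v ∈ N_S(x_0), and z_0 = x_0 + v. Let K = T_S(x_0) ∩ {v}^⊥ be the critical cone. Then the directional derivative of the Euclidean projector Π_S at z_0 equals the Euclidean projection onto K: dΠ_S(z_0)(h) = Π_K(h) for all h ∈ R^q. -/
open Filter
open scoped RealInnerProductSpace

/-!
Write `p = Π_K h` and `c = h - p`. For small `t > 0` the point `x₀ + t p` already satisfies the
variational inequality characterizing `Π_S (x₀ + v + t h)`: since `⟪v, p⟫ = ⟪c, p⟫ = 0`, that
inequality reduces to `⟪v + t c, w⟫ ≤ 0` on the tangent cone `T` of `S` at `x₀`. Because `S` is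
polyhedral, `T` is the conic hull of finitely many vectors `g` (Minkowski–Weyl, proved by
Fourier–Motzkin elimination). For each of them `⟪v, g⟫ ≤ 0`, and `⟪c, g⟫ ≤ 0` as soon as
`⟪v, g⟫ = 0`, because then `g ∈ K`; so a single `t > 0` works for all generators at once.
Hence the difference quotient is eventually constant, equal to `p`.
-/

open Set Topology PointedCone

section

variable {E : Type*} [NormedAddCommGroup E] [InnerProductSpace ℝ E]

lemma inner_sub_nonpos_of_forall_norm_sub_le {C : Set E} (hC : Convex ℝ C) {z u : E}
    (hu : u ∈ C) (hmin : ∀ s ∈ C, ‖z - u‖ ≤ ‖z - s‖) : ∀ s ∈ C, ⟪z - u, s - u⟫ ≤ 0 := by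
  have : Nonempty C := ⟨⟨u, hu⟩⟩
  refine (norm_eq_iInf_iff_real_inner_le_zero hC hu).1 <| le_antisymm
    (le_ciInf fun s => hmin s s.2) ?_
  exact ciInf_le ⟨0, forall_mem_range.2 fun _ => norm_nonneg _⟩ (⟨u, hu⟩ : C)

lemma eq_of_forall_norm_sub_le_of_inner_nonpos {C : Set E} {z u y : E} (hu : u ∈ C)
    (hmin : ∀ s ∈ C, ‖z - u‖ ≤ ‖z - s‖) (hy : y ∈ C) (hvi : ∀ s ∈ C, ⟪z - y, s - y⟫ ≤ 0) :
    u = y := by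
  have hsq : ‖z - u‖ ^ 2 = ‖z - y‖ ^ 2 - 2 * ⟪z - y, u - y⟫ + ‖u - y‖ ^ 2 := by
    rw [show z - u = (z - y) - (u - y) by abel, norm_sub_sq_real]
  have hle : ‖z - u‖ ^ 2 ≤ ‖z - y‖ ^ 2 := pow_le_pow_left₀ (norm_nonneg _) (hmin y hy) 2
  have : ‖u - y‖ ^ 2 ≤ 0 := by linarith [hvi u hu]
  rw [← sub_eq_zero, ← norm_eq_zero]
  exact (pow_eq_zero_iff two_ne_zero).1 (le_antisymm this (sq_nonneg _))

lemma inner_nonpos_of_exists_add_smul_mem {S : Set E} {x v w : E}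
    (hv : ∀ s ∈ S, ⟪v, s - x⟫ ≤ 0) (hw : ∃ t : ℝ, 0 < t ∧ x + t • w ∈ S) : ⟪v, w⟫ ≤ 0 := by
  obtain ⟨t, ht, hxt⟩ := hw
  have := hv _ hxt
  rw [add_sub_cancel_left, real_inner_smul_right] at this
  exact nonpos_of_mul_nonpos_right this ht

lemma inner_add_smul_sub_add_smul_nonpos {S : Set E} {x v h p : E} {t : ℝ}
    (hvp : ⟪v, p⟫ = 0) (hcp : ⟪h - p, p⟫ = 0) (hS : ∀ s ∈ S, ⟪v + t • (h - p), s - x⟫ ≤ 0) :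
    ∀ s ∈ S, ⟪x + v + t • h - (x + t • p), s - (x + t • p)⟫ ≤ 0 := by
  intro s hs
  have := hS s hs
  rw [show x + v + t • h - (x + t • p) = v + t • (h - p) by module,
    show s - (x + t • p) = (s - x) - t • p by abel]
  simp only [inner_sub_right, inner_add_left, real_inner_smul_left, real_inner_smul_right,
    hcp, hvp] at this ⊢
  linarith

lemma eventually_add_mul_nonpos {b d : ℝ} (hb : b ≤ 0) (hd : b = 0 → d ≤ 0) :
    ∀ᶠ t in 𝓝[>] (0 : ℝ), b + t * d ≤ 0 := by
  rcases hb.lt_or_eq with hb | rfl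
  · have : Tendsto (fun t : ℝ => b + t * d) (𝓝[>] 0) (𝓝 b) :=
      ((continuous_const.add (continuous_id.mul continuous_const)).tendsto' 0 b
        (by simp)).mono_left nhdsWithin_le_nhds
    exact (this.eventually_lt_const hb).mono fun _ => le_of_lt
  · filter_upwards [self_mem_nhdsWithin] with t (ht : 0 < t)
    simpa using mul_nonpos_of_nonneg_of_nonpos ht.le (hd rfl)

namespace PointedCone

lemma inner_nonpos_of_mem_hull {s : Set E} {a w : E} (hs : ∀ g ∈ s, ⟪a, g⟫ ≤ 0)
    (hw : w ∈ hull ℝ s) : ⟪a, w⟫ ≤ 0 := by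
  induction hw using Submodule.span_induction with
  | mem g hg => exact hs g hg
  | zero => simp
  | add x y _ _ hx hy => rw [inner_add_right]; linarith
  | smul r x _ hx =>
    rw [← Nonneg.coe_smul, real_inner_smul_right]
    exact mul_nonpos_of_nonneg_of_nonpos r.2 hx

lemma eq_zero_of_mem_hull_of_inner_nonpos {s : Set E} {a w : E} (hs : ∀ g ∈ s, 0 < ⟪a, g⟫)
    (hw : w ∈ hull ℝ s) (haw : ⟪a, w⟫ ≤ 0) : w = 0 := by
  suffices 0 < ⟪a, w⟫ ∨ w = 0 from this.resolve_left haw.not_gt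
  clear haw
  induction hw using Submodule.span_induction with
  | mem g hg => exact .inl (hs g hg)
  | zero => exact .inr rfl
  | add x y _ _ hx hy =>
    rcases hx with hx | rfl
    · rcases hy with hy | rfl
      · left; rw [inner_add_right]; linarith
      · simpa using Or.inl hx
    · simpa using hy
  | smul r x _ hx =>
    rcases r.2.lt_or_eq with hr | hr
    · rcases hx with hx | rfl
      · left; rw [← Nonneg.coe_smul, real_inner_smul_right]; exact mul_pos hr hx
      · simp
    · right; rw [← Nonneg.coe_smul, ← hr, zero_smul]

lemma apply_mem_hull_image2 {F G : Type*} [AddCommGroup F] [Module ℝ F] [AddCommGroup G]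
    [Module ℝ G] (B : E →ₗ[ℝ] F →ₗ[ℝ] G) {s : Set E} {t : Set F} {x : E} {y : F}
    (hx : x ∈ hull ℝ s) (hy : y ∈ hull ℝ t) :
    B x y ∈ hull ℝ (image2 (fun x y => B x y) s t) := by
  have := Submodule.apply_mem_map₂ (B.restrictScalars₁₂ {c : ℝ // 0 ≤ c} {c : ℝ // 0 ≤ c}) hx hy
  rwa [Submodule.map₂_span_span] at this

lemma span_subset_hull_union_neg (s : Set E) :
    (Submodule.span ℝ s : Set E) ⊆ hull ℝ (s ∪ -s) := by
  intro x hx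
  suffices x ∈ hull ℝ (s ∪ -s) ∧ -x ∈ hull ℝ (s ∪ -s) from this.1
  induction hx using Submodule.span_induction with
  | mem g hg => exact ⟨subset_hull (.inl hg), subset_hull (.inr (by simpa using hg))⟩
  | zero => simp
  | add x y _ _ hx hy => exact ⟨add_mem hx.1 hy.1, by rw [neg_add]; exact add_mem hx.2 hy.2⟩
  | smul r x _ hx =>
    rcases le_total 0 r with hr | hr
    · exact ⟨smul_mem _ hr hx.1, by simpa using smul_mem _ hr hx.2⟩
    · exact ⟨by simpa using smul_mem _ (neg_nonneg.2 hr) hx.2,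
        by simpa using smul_mem _ (neg_nonneg.2 hr) hx.1⟩

lemma exists_finite_hull_eq_top [FiniteDimensional ℝ E] :
    ∃ G : Set E, G.Finite ∧ hull ℝ G = ⊤ := by
  let b := Module.finBasis ℝ E
  refine ⟨range b ∪ -range b, (finite_range b).union (finite_range b).neg, ?_⟩
  rw [eq_top_iff]
  intro x _
  exact span_subset_hull_union_neg _ (by simp [b.span_eq])

def fourierMotzkin (a : E) (G : Set E) : Set E :=
  {g ∈ G | ⟪a, g⟫ ≤ 0} ∪
    image2 (fun g g' => ⟪a, g⟫ • g' - ⟪a, g'⟫ • g) {g ∈ G | 0 < ⟪a, g⟫} {g ∈ G | ⟪a, g⟫ ≤ 0}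

lemma _root_.Set.Finite.fourierMotzkin {G : Set E} (hG : G.Finite) (a : E) :
    (fourierMotzkin a G).Finite :=
  (hG.sep _).union ((hG.sep _).image2 _ (hG.sep _))

lemma mem_hull_fourierMotzkin {a w : E} {G : Set E} (hw : w ∈ hull ℝ G) (haw : ⟪a, w⟫ ≤ 0) :
    w ∈ hull ℝ (fourierMotzkin a G) := by
  have hG : G = {g ∈ G | ⟪a, g⟫ ≤ 0} ∪ {g ∈ G | 0 < ⟪a, g⟫} := by
    ext g; simp only [mem_union, mem_ofPred_eq, ← and_or_left, le_or_gt, and_true]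
  rw [hG, hull, Submodule.span_union, Submodule.mem_sup] at hw
  obtain ⟨n, hn, u, hu, rfl⟩ := hw
  have hn' : n ∈ hull ℝ (fourierMotzkin a G) := Submodule.span_mono subset_union_left hn
  rw [inner_add_right] at haw
  rcases (inner_nonpos_of_mem_hull (fun g hg => hg.2) hn).lt_or_eq with han | han
  · let B : E →ₗ[ℝ] E →ₗ[ℝ] E := LinearMap.mk₂ ℝ (fun g g' => ⟪a, g⟫ • g' - ⟪a, g'⟫ • g)
      (fun _ _ _ => by rw [inner_add_right]; module)
      (fun _ _ _ => by rw [real_inner_smul_right]; module)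
      (fun _ _ _ => by rw [inner_add_right]; module)
      (fun _ _ _ => by rw [real_inner_smul_right]; module)
    have hcomb : ⟪a, u⟫ • n - ⟪a, n⟫ • u ∈ hull ℝ (fourierMotzkin a G) :=
      Submodule.span_mono subset_union_right (apply_mem_hull_image2 B hu hn)
    have hnu : n + u = ((⟪a, n⟫ + ⟪a, u⟫) / ⟪a, n⟫) • n
        + (-⟪a, n⟫)⁻¹ • (⟪a, u⟫ • n - ⟪a, n⟫ • u) := by
      have := han.ne
      match_scalars
      · field_simp
        ring
      · field_simp
    rw [hnu]
    exact add_mem (smul_mem _ (div_nonneg_of_nonpos haw han.le) hn')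
      (smul_mem _ (inv_nonneg.2 (neg_nonneg.2 han.le)) hcomb)
  · rw [eq_zero_of_mem_hull_of_inner_nonpos (fun g hg => hg.2) hu (by linarith), add_zero]
    exact hn'

lemma coe_hull_fourierMotzkin (a : E) (G : Set E) :
    (hull ℝ (fourierMotzkin a G) : Set E) = (hull ℝ G : Set E) ∩ {w | ⟪a, w⟫ ≤ 0} := by
  refine Subset.antisymm (fun w hw => ⟨Submodule.span_le.2 ?_ hw, inner_nonpos_of_mem_hull ?_ hw⟩)
    fun w ⟨hw, haw⟩ => mem_hull_fourierMotzkin hw haw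
  · rintro _ (⟨hg, -⟩ | ⟨g, ⟨hg, hag⟩, g', ⟨hg', hag'⟩, rfl⟩)
    · exact subset_hull hg
    · show ⟪a, g⟫ • g' - ⟪a, g'⟫ • g ∈ hull ℝ G
      rw [sub_eq_add_neg, ← neg_smul]
      exact add_mem (smul_mem _ hag.le (subset_hull hg'))
        (smul_mem _ (neg_nonneg.2 hag') (subset_hull hg))
  · rintro _ (⟨-, hg⟩ | ⟨g, -, g', -, rfl⟩)
    · exact hg
    · simp only [inner_sub_right, real_inner_smul_right]
      linarith

theorem exists_finite_coe_hull_eq_setOf_inner_nonpos [FiniteDimensional ℝ E] {A : Set E}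
    (hA : A.Finite) :
    ∃ G : Set E, G.Finite ∧ (hull ℝ G : Set E) = {w | ∀ a ∈ A, ⟪a, w⟫ ≤ 0} := by
  induction A, hA using Set.Finite.induction_on with
  | empty =>
    obtain ⟨G, hG, htop⟩ := exists_finite_hull_eq_top (E := E)
    exact ⟨G, hG, by simp [htop]⟩
  | @insert a A _ _ ih =>
    obtain ⟨G, hG, hGA⟩ := ih
    refine ⟨fourierMotzkin a G, hG.fourierMotzkin a, ?_⟩
    rw [coe_hull_fourierMotzkin, hGA]
    ext w
    simp [and_comm]

lemma inner_sub_eq_zero_and_nonpos_of_forall_norm_sub_le (C : PointedCone ℝ E) {z p : E}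
    (hp : p ∈ C) (hmin : ∀ s ∈ C, ‖z - p‖ ≤ ‖z - s‖) :
    ⟪z - p, p⟫ = 0 ∧ ∀ w ∈ C, ⟪z - p, w⟫ ≤ 0 := by
  have hvi := inner_sub_nonpos_of_forall_norm_sub_le C.convex hp hmin
  have h0 := hvi 0 C.zero_mem
  have h2 := hvi ((2 : ℝ) • p) (C.smul_mem zero_le_two hp)
  refine ⟨?_, fun w hw => by simpa using hvi (w + p) (add_mem hw hp)⟩
  rw [zero_sub, inner_neg_right] at h0
  rw [two_smul, add_sub_cancel_right] at h2
  linarith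

lemma eventually_forall_mem_hull_inner_add_smul_nonpos {G : Set E} (hG : G.Finite) {v c : E}
    (hv : ∀ g ∈ G, ⟪v, g⟫ ≤ 0) (hc : ∀ g ∈ G, ⟪v, g⟫ = 0 → ⟪c, g⟫ ≤ 0) :
    ∀ᶠ t in 𝓝[>] (0 : ℝ), ∀ w ∈ hull ℝ G, ⟪v + t • c, w⟫ ≤ 0 := by
  filter_upwards [(eventually_all_finite hG).2 fun g hg =>
    eventually_add_mul_nonpos (hv g hg) (hc g hg)] with t ht w hw
  refine inner_nonpos_of_mem_hull (fun g hg => ?_) hw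
  simpa [inner_add_left, real_inner_smul_left] using ht g hg

end PointedCone

lemma eventually_add_smul_mem_polyhedron {H : Finset (E × ℝ)} {x w : E}
    (hx : x ∈ {y | ∀ p ∈ H, ⟪p.1, y⟫ ≤ p.2}) (hw : ∀ p ∈ H, ⟪p.1, x⟫ = p.2 → ⟪p.1, w⟫ ≤ 0) :
    ∀ᶠ t in 𝓝[>] (0 : ℝ), x + t • w ∈ {y | ∀ p ∈ H, ⟪p.1, y⟫ ≤ p.2} := by
  simp only [mem_ofPred_eq, eventually_all_finset]
  intro p hp
  filter_upwards [eventually_add_mul_nonpos (sub_nonpos.2 (hx p hp))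
    fun h => hw p hp (sub_eq_zero.1 h)] with t ht
  rw [inner_add_right, real_inner_smul_right]
  linarith

lemma exists_add_smul_mem_polyhedron_iff {H : Finset (E × ℝ)} {x w : E}
    (hx : x ∈ {y | ∀ p ∈ H, ⟪p.1, y⟫ ≤ p.2}) :
    (∃ t : ℝ, 0 < t ∧ x + t • w ∈ {y | ∀ p ∈ H, ⟪p.1, y⟫ ≤ p.2}) ↔
      ∀ p ∈ H, ⟪p.1, x⟫ = p.2 → ⟪p.1, w⟫ ≤ 0 := by
  refine ⟨fun ⟨t, ht, hxt⟩ p hp hact => ?_, fun hw => ?_⟩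
  · have := hxt p hp
    rw [inner_add_right, real_inner_smul_right, hact] at this
    nlinarith
  · obtain ⟨t, hxt, ht⟩ :=
      ((eventually_add_smul_mem_polyhedron hx hw).and self_mem_nhdsWithin).exists
    exact ⟨t, ht, hxt⟩

theorem exists_finite_mem_hull_iff_exists_add_smul_mem_polyhedron [FiniteDimensional ℝ E]
    {H : Finset (E × ℝ)} {x : E} (hx : x ∈ {y | ∀ p ∈ H, ⟪p.1, y⟫ ≤ p.2}) :
    ∃ G : Set E, G.Finite ∧ ∀ w,
      (∃ t : ℝ, 0 < t ∧ x + t • w ∈ {y | ∀ p ∈ H, ⟪p.1, y⟫ ≤ p.2}) ↔ w ∈ hull ℝ G := by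
  obtain ⟨G, hGfin, hG⟩ := exists_finite_coe_hull_eq_setOf_inner_nonpos
    ((H.finite_toSet.sep fun p => ⟪p.1, x⟫ = p.2).image Prod.fst)
  refine ⟨G, hGfin, fun w => ?_⟩
  rw [exists_add_smul_mem_polyhedron_iff hx, ← SetLike.mem_coe, hG]
  simp only [mem_ofPred_eq, forall_mem_image, Finset.mem_coe, and_imp]

end

/-- let `S` be a polyhedral convex set, `x₀ ∈ S`,
`v ∈ N_S(x₀)`, and `z₀ = x₀ + v`. Let `K = T_S(x₀) ∩ {v}^⊥` be the critical cone,
where `T_S(x₀) = {w : ∃ t > 0, x₀ + t w ∈ S}`. Then the directional derivative of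
the Euclidean projector `Π_S` at `z₀` in any direction `h` equals `Π_K h`, the
Euclidean projection of `h` onto `K`. Both projections are characterized here as
nearest-point maps. -/
theorem dirDeriv_proj_eq_proj_criticalCone {q : ℕ}
    (S : Set (EuclideanSpace ℝ (Fin q))) (hSpoly : IsPolyhedral S)
    (x₀ : EuclideanSpace ℝ (Fin q)) (hx₀ : x₀ ∈ S)
    (v : EuclideanSpace ℝ (Fin q)) (hv : ∀ s ∈ S, ⟪v, s - x₀⟫ ≤ 0)
    (K : Set (EuclideanSpace ℝ (Fin q)))
    (hK : K = {w | ∃ t : ℝ, 0 < t ∧ x₀ + t • w ∈ S} ∩ {w | ⟪w, v⟫ = 0})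
    (projS : EuclideanSpace ℝ (Fin q) → EuclideanSpace ℝ (Fin q))
    (hprojS : ∀ z, projS z ∈ S ∧ ∀ s ∈ S, ‖z - projS z‖ ≤ ‖z - s‖)
    (projK : EuclideanSpace ℝ (Fin q) → EuclideanSpace ℝ (Fin q))
    (hprojK : ∀ z, projK z ∈ K ∧ ∀ s ∈ K, ‖z - projK z‖ ≤ ‖z - s‖)
    (h : EuclideanSpace ℝ (Fin q)) :
    Tendsto (fun t : ℝ => t⁻¹ • (projS ((x₀ + v) + t • h) - projS (x₀ + v)))
      (nhdsWithin 0 (Set.Ioi 0)) (nhds (projK h)) := by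
  obtain ⟨H, rfl⟩ := hSpoly
  obtain ⟨G, hGfin, hT⟩ := exists_finite_mem_hull_iff_exists_add_smul_mem_polyhedron hx₀
  let C : PointedCone ℝ (EuclideanSpace ℝ (Fin q)) := hull ℝ G ⊓ ofSubmodule (ℝ ∙ v)ᗮ
  have hKC : K = C := by
    ext w
    rw [hK, mem_inter_iff, mem_ofPred_eq, hT]
    simp [C, Submodule.mem_orthogonal_singleton_iff_inner_left]
  set p := projK h
  obtain ⟨hpK, hpmin⟩ : p ∈ K ∧ ∀ s ∈ K, ‖h - p‖ ≤ ‖h - s‖ := hprojK h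
  obtain ⟨hcp, hcC⟩ :=
    C.inner_sub_eq_zero_and_nonpos_of_forall_norm_sub_le (hKC ▸ hpK) (hKC ▸ hpmin)
  have hε := eventually_forall_mem_hull_inner_add_smul_nonpos hGfin
    (fun g hg => inner_nonpos_of_exists_add_smul_mem hv ((hT g).2 (subset_hull hg)))
    fun g hg hvg => hcC g ⟨subset_hull hg, Submodule.mem_orthogonal_singleton_iff_inner_right.2 hvg⟩
  rw [hK] at hpK
  have hpS := eventually_add_smul_mem_polyhedron hx₀
    ((exists_add_smul_mem_polyhedron_iff hx₀).1 hpK.1)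
  have h0 : projS (x₀ + v) = x₀ :=
    eq_of_forall_norm_sub_le_of_inner_nonpos (hprojS _).1 (hprojS _).2 hx₀ (by simpa using hv)
  refine tendsto_const_nhds.congr' ?_
  filter_upwards [hε, hpS, self_mem_nhdsWithin] with t hεt hpt (ht : 0 < t)
  have ht' : projS (x₀ + v + t • h) = x₀ + t • p :=
    eq_of_forall_norm_sub_le_of_inner_nonpos (hprojS _).1 (hprojS _).2 hpt <|
      inner_add_smul_sub_add_smul_nonpos (by rw [real_inner_comm]; exact hpK.2) hcp
        fun s hs => hεt (s - x₀) ((hT _).1 ⟨1, one_pos, by simpa using hs⟩)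
  rw [ht', h0, add_sub_cancel_left, smul_smul, inv_mul_cancel₀ ht.ne', one_smul]
end

section
/- Let L : R^q → R^q be a linear map, K ⊂ R^q a polyhedral convex cone, and define the normal map L_K(h) = L(Π_K(h)) + h - Π_K(h). If the restriction of L to the linear span of K is positive definite (i.e., ⟨Lw, w⟩ > 0 for all nonzero w in span K), then L_K is injective. -/
open scoped RealInnerProductSpace

/-- let `L : ℝ^q → ℝ^q` be linear, `K` a polyhedral convex cone with
Euclidean projection `πK`, and `L_K h = L (πK h) + h - πK h` the normal map. If the
restriction of `L` to the linear span of `K` is positive definite, then `L_K` is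
injective. -/
theorem normal_map_injective_of_posDef_on_span {q : ℕ}
    (L : EuclideanSpace ℝ (Fin q) →ₗ[ℝ] EuclideanSpace ℝ (Fin q))
    (K : Set (EuclideanSpace ℝ (Fin q)))
    (hKpoly : IsPolyhedral K) (hKconv : Convex ℝ K)
    (hKcone : ∀ x ∈ K, ∀ c : ℝ, 0 < c → c • x ∈ K)
    (πK : EuclideanSpace ℝ (Fin q) → EuclideanSpace ℝ (Fin q))
    (hπK : ∀ z, πK z ∈ K ∧ ∀ s ∈ K, ‖z - πK z‖ ≤ ‖z - s‖)
    (hL : ∀ w ∈ Submodule.span ℝ K, w ≠ 0 → 0 < ⟪L w, w⟫) :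
    Function.Injective (fun h => L (πK h) + h - πK h) := by
  -- variational inequality for the projection
  have vi : ∀ z, ∀ s ∈ K, ⟪z - πK z, s - πK z⟫ ≤ 0 := by
    intro z s hs
    have hx : πK z ∈ K := (hπK z).1
    have heq : ‖z - πK z‖ = ⨅ w : K, ‖z - w‖ := by
      haveI : Nonempty K := ⟨⟨πK z, hx⟩⟩
      refine le_antisymm (le_ciInf fun w => (hπK z).2 w w.2) ?_
      exact ciInf_le ⟨0, by rintro r ⟨w, rfl⟩; exact norm_nonneg _⟩ (⟨πK z, hx⟩ : K)
    exact (norm_eq_iInf_iff_real_inner_le_zero hKconv hx).1 heq s hs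
  -- orthogonality: ⟪z - πK z, πK z⟫ = 0
  have orth : ∀ z, ⟪z - πK z, πK z⟫ = 0 := by
    intro z
    have hx : πK z ∈ K := (hπK z).1
    have h2 := vi z ((2 : ℝ) • πK z) (hKcone _ hx 2 two_pos)
    have hhalf := vi z (((1 : ℝ)/2) • πK z) (hKcone _ hx (1/2) (by norm_num))
    have e2 : (2 : ℝ) • πK z - πK z = πK z := by
      rw [two_smul]; abel
    have eh : ((1 : ℝ)/2) • πK z - πK z = -(((1 : ℝ)/2) • πK z) := by
      module
    rw [e2] at h2
    rw [eh, inner_neg_right, real_inner_smul_right] at hhalf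
    have : 0 ≤ ⟪z - πK z, πK z⟫ := by nlinarith
    linarith
  -- nonpositivity on K: ⟪z - πK z, s⟫ ≤ 0 for s ∈ K
  have negK : ∀ z, ∀ s ∈ K, ⟪z - πK z, s⟫ ≤ 0 := by
    intro z s hs
    have := vi z s hs
    rw [inner_sub_right, orth z] at this
    linarith
  intro h1 h2 heq
  simp only at heq
  set x1 := πK h1 with hx1def
  set x2 := πK h2 with hx2def
  have hx1 : x1 ∈ K := (hπK h1).1
  have hx2 : x2 ∈ K := (hπK h2).1
  have hLd : L (x1 - x2) = (h2 - x2) - (h1 - x1) := by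
    rw [map_sub]
    have : L x1 + h1 - x1 = L x2 + h2 - x2 := heq
    abel_nf
    abel_nf at this
    linear_combination (norm := module) this
  have key : ⟪L (x1 - x2), x1 - x2⟫ ≤ 0 := by
    rw [hLd]
    have e : ⟪(h2 - x2) - (h1 - x1), x1 - x2⟫
        = ⟪h2 - x2, x1⟫ + ⟪h1 - x1, x2⟫
          - ⟪h2 - x2, x2⟫ - ⟪h1 - x1, x1⟫ := by
      simp only [inner_sub_left, inner_sub_right]; ring
    rw [e, orth h1, orth h2]
    have a1 := negK h2 x1 hx1
    have a2 := negK h1 x2 hx2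
    linarith
  have hd0 : x1 - x2 = 0 := by
    by_contra hne
    have hmem : x1 - x2 ∈ Submodule.span ℝ K :=
      Submodule.sub_mem _ (Submodule.subset_span hx1) (Submodule.subset_span hx2)
    exact absurd key (not_le.2 (hL _ hmem hne))
  have hx12 : x1 = x2 := sub_eq_zero.1 hd0
  have : L x1 + h1 - x1 = L x2 + h2 - x2 := heq
  rw [hx12] at this
  linear_combination (norm := module) this
end

section
/- Let L : R^q → R^q be a linear map whose restriction to R^q is positive definite, and let K ⊂ R^q be a closed convex cone. Then the normal map L_K(h) = L(Π_K(h)) + h - Π_K(h) is a bijection from R^q to R^q. -/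
open scoped RealInnerProductSpace

/-- let `L : ℝ^q → ℝ^q` be a positive definite linear map and `K` a
(nonempty) closed convex cone with Euclidean projection `πK`. Then the normal map
`L_K h = L (πK h) + h - πK h` is a bijection from `ℝ^q` to `ℝ^q`. -/
theorem normal_map_bijective_of_posDef {q : ℕ}
    (L : EuclideanSpace ℝ (Fin q) →ₗ[ℝ] EuclideanSpace ℝ (Fin q))
    (hL : ∀ w : EuclideanSpace ℝ (Fin q), w ≠ 0 → 0 < ⟪L w, w⟫)
    (K : Set (EuclideanSpace ℝ (Fin q)))
    (hKne : K.Nonempty) (hKcl : IsClosed K) (hKconv : Convex ℝ K)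
    (hKcone : ∀ x ∈ K, ∀ c : ℝ, 0 < c → c • x ∈ K)
    (πK : EuclideanSpace ℝ (Fin q) → EuclideanSpace ℝ (Fin q))
    (hπK : ∀ z, πK z ∈ K ∧ ∀ s ∈ K, ‖z - πK z‖ ≤ ‖z - s‖) :
    Function.Bijective (fun h => L (πK h) + h - πK h) := by
  classical
  haveI : Nonempty K := hKne.to_subtype
  -- variational characterization of the projection
  have hproj : ∀ z : EuclideanSpace ℝ (Fin q), ∀ s ∈ K, ⟪z - πK z, s - πK z⟫ ≤ 0 := by
    intro z s hs
    have hmin : ‖z - πK z‖ = ⨅ w : K, ‖z - (w : EuclideanSpace ℝ (Fin q))‖ := by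
      apply le_antisymm
      · exact le_ciInf fun w => (hπK z).2 w w.2
      · exact ciInf_le ⟨0, fun b ⟨w, hw⟩ => hw ▸ norm_nonneg _⟩ (⟨πK z, (hπK z).1⟩ : K)
    exact (norm_eq_iInf_iff_real_inner_le_zero hKconv (hπK z).1).mp hmin s hs
  -- uniqueness of the projection
  have huniq : ∀ z x : EuclideanSpace ℝ (Fin q), x ∈ K →
      (∀ s ∈ K, ⟪z - x, s - x⟫ ≤ 0) → πK z = x := by
    intro z x hx hchar
    have h1 := hproj z x hx
    have h2 := hchar (πK z) (hπK z).1
    have key : ⟪πK z - x, πK z - x⟫ ≤ 0 := by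
      have e : ⟪πK z - x, πK z - x⟫
          = ⟪z - x, πK z - x⟫ - ⟪z - πK z, πK z - x⟫ := by
        rw [← inner_sub_left]; congr 1; abel
      have e2 : ⟪z - πK z, x - πK z⟫ = -⟪z - πK z, πK z - x⟫ := by
        rw [← inner_neg_right, neg_sub]
      rw [e2] at h1
      linarith
    exact sub_eq_zero.mp (real_inner_self_nonpos.mp key)
  -- injectivity
  have hinj : Function.Injective
      (fun h : EuclideanSpace ℝ (Fin q) => L (πK h) + h - πK h) := by
    intro h1 h2 heq
    simp only at heq
    set x1 := πK h1 with hx1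
    set x2 := πK h2 with hx2
    have e0 : L x1 + h1 - x1 - (L x2 + h2 - x2) = 0 := sub_eq_zero_of_eq heq
    have eL : L (x1 - x2) = (h2 - x2) - (h1 - x1) := by
      rw [map_sub, ← sub_eq_zero, ← e0]; abel
    have hmono : ⟪L (x1 - x2), x1 - x2⟫ ≤ 0 := by
      have a1 : ⟪h1 - x1, x2 - x1⟫ ≤ 0 := hproj h1 x2 (hπK h2).1
      have a2 : ⟪h2 - x2, x1 - x2⟫ ≤ 0 := hproj h2 x1 (hπK h1).1
      have e1 : ⟪L (x1 - x2), x1 - x2⟫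
          = ⟪h2 - x2, x1 - x2⟫ - ⟪h1 - x1, x1 - x2⟫ := by
        rw [eL, inner_sub_left]
      have e2 : ⟪h1 - x1, x2 - x1⟫ = -⟪h1 - x1, x1 - x2⟫ := by
        rw [← inner_neg_right, neg_sub]
      rw [e2] at a1
      linarith
    have hx12 : x1 = x2 := by
      by_contra hne
      have := hL (x1 - x2) (sub_ne_zero.mpr hne)
      linarith
    have e3 : L (x1 - x2) = (h2 - x2) - (h1 - x1) := eL
    rw [hx12, sub_self, map_zero] at e3
    have : h2 - x2 - (h1 - x2) = h2 - h1 := by abel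
    rw [this] at e3
    exact (sub_eq_zero.mp e3.symm).symm
  constructor
  · exact hinj
  -- surjectivity
  intro y
  by_cases htriv : ∀ w : EuclideanSpace ℝ (Fin q), w = 0
  · exact ⟨y, ((htriv _).trans (htriv y).symm)⟩
  push_neg at htriv
  obtain ⟨w0, hw0⟩ := htriv
  haveI : Nontrivial (EuclideanSpace ℝ (Fin q)) := ⟨w0, 0, hw0⟩
  -- strong monotonicity constant
  have hsph : (Metric.sphere (0 : EuclideanSpace ℝ (Fin q)) 1).Nonempty :=
    NormedSpace.sphere_nonempty.mpr zero_le_one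
  have hcont : Continuous fun w : EuclideanSpace ℝ (Fin q) => ⟪L w, w⟫ :=
    Continuous.inner L.continuous_of_finiteDimensional continuous_id
  obtain ⟨w1, hw1s, hw1min⟩ :=
    (isCompact_sphere (0 : EuclideanSpace ℝ (Fin q)) 1).exists_isMinOn hsph
      hcont.continuousOn
  rw [isMinOn_iff] at hw1min
  have hw1n : ‖w1‖ = 1 := by simpa using hw1s
  set c : ℝ := ⟪L w1, w1⟫ with hc_def
  have hcpos : 0 < c := hL w1 (by intro h; rw [h] at hw1n; simp at hw1n)
  have hc : ∀ w : EuclideanSpace ℝ (Fin q), c * ‖w‖ ^ 2 ≤ ⟪L w, w⟫ := by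
    intro w
    rcases eq_or_ne w 0 with rfl | hw
    · simp
    · have hwn : (0:ℝ) < ‖w‖ := norm_pos_iff.mpr hw
      have hu : ‖(‖w‖⁻¹ • w)‖ = 1 := by
        rw [norm_smul, norm_inv, norm_norm, inv_mul_cancel₀ hwn.ne']
      have hmem : (‖w‖⁻¹ • w) ∈ Metric.sphere (0 : EuclideanSpace ℝ (Fin q)) 1 := by
        simpa using hu
      have := hw1min _ hmem
      have hval : ⟪L (‖w‖⁻¹ • w), ‖w‖⁻¹ • w⟫ = ‖w‖⁻¹ ^ 2 * ⟪L w, w⟫ := by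
        rw [map_smul, real_inner_smul_left, real_inner_smul_right]; ring
      rw [hval] at this
      have h2 : c * ‖w‖ ^ 2 ≤ ‖w‖⁻¹ ^ 2 * ⟪L w, w⟫ * ‖w‖ ^ 2 := by
        nlinarith
      calc c * ‖w‖ ^ 2 ≤ ‖w‖⁻¹ ^ 2 * ⟪L w, w⟫ * ‖w‖ ^ 2 := h2
        _ = ⟪L w, w⟫ := by field_simp
  -- operator norm bound
  set M : ℝ := ‖LinearMap.toContinuousLinearMap L‖ with hM_def
  have hM0 : 0 ≤ M := norm_nonneg _
  have hM : ∀ w : EuclideanSpace ℝ (Fin q), ‖L w‖ ≤ M * ‖w‖ := fun w =>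
    (LinearMap.toContinuousLinearMap L).le_opNorm w
  have hcM : c ≤ M := by
    have h1 : c ≤ ‖L w1‖ * ‖w1‖ := real_inner_le_norm _ _
    have h2 := hM w1
    rw [hw1n] at h1 h2
    simpa using h1.trans (by simpa using h2)
  set ρ : ℝ := c / (M ^ 2 + 1) with hρ_def
  have hρ : 0 < ρ := div_pos hcpos (by positivity)
  set kk : ℝ := 1 - 2 * ρ * c + ρ ^ 2 * M ^ 2 with hkk_def
  have hkk0 : 0 ≤ kk := by nlinarith [sq_nonneg (1 - ρ * M)]
  have hkk1 : kk < 1 := by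
    have : ρ * M ^ 2 < 2 * c := by
      rw [hρ_def]
      rw [div_mul_eq_mul_div, div_lt_iff₀ (by positivity)]
      nlinarith
    nlinarith
  set k : ℝ := Real.sqrt kk with hk_def
  have hk0 : 0 ≤ k := Real.sqrt_nonneg _
  have hk1 : k < 1 := by
    rw [hk_def, show (1:ℝ) = Real.sqrt 1 from (Real.sqrt_one).symm]
    exact Real.sqrt_lt_sqrt hkk0 (by simpa using hkk1)
  -- contraction estimate
  have hcontr : ∀ w : EuclideanSpace ℝ (Fin q), ‖w - ρ • L w‖ ≤ k * ‖w‖ := by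
    intro w
    have hsq : ‖w - ρ • L w‖ ^ 2 ≤ kk * ‖w‖ ^ 2 := by
      have e : ‖w - ρ • L w‖ ^ 2
          = ‖w‖ ^ 2 - 2 * (ρ * ⟪L w, w⟫) + ρ ^ 2 * ‖L w‖ ^ 2 := by
        rw [norm_sub_sq_real, real_inner_smul_right, norm_smul]
        rw [real_inner_comm]
        rw [Real.norm_eq_abs, abs_of_pos hρ]
        ring
      rw [e]
      have b1 := hc w
      have b2 : ‖L w‖ ^ 2 ≤ (M * ‖w‖) ^ 2 := by
        have := hM w
        nlinarith [norm_nonneg (L w), norm_nonneg w]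
      nlinarith
    have : ‖w - ρ • L w‖ = Real.sqrt (‖w - ρ • L w‖ ^ 2) :=
      (Real.sqrt_sq (norm_nonneg _)).symm
    rw [this]
    have hrhs : k * ‖w‖ = Real.sqrt (kk * ‖w‖ ^ 2) := by
      rw [Real.sqrt_mul hkk0, Real.sqrt_sq (norm_nonneg _)]
    rw [hrhs]
    exact Real.sqrt_le_sqrt hsq
  -- nonexpansiveness of the projection
  have hnonexp : ∀ a b : EuclideanSpace ℝ (Fin q), ‖πK a - πK b‖ ≤ ‖a - b‖ := by
    intro a b
    rcases eq_or_ne (πK a) (πK b) with he | hne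
    · simp [he]
    have a1 : ⟪a - πK a, πK b - πK a⟫ ≤ 0 := hproj a (πK b) (hπK b).1
    have a2 : ⟪b - πK b, πK a - πK b⟫ ≤ 0 := hproj b (πK a) (hπK a).1
    have e : ⟪πK a - πK b, πK a - πK b⟫
        = ⟪a - b, πK a - πK b⟫ + ⟪πK a - a, πK a - πK b⟫
          + ⟪b - πK b, πK a - πK b⟫ := by
      rw [← inner_add_left, ← inner_add_left]; congr 1; abel
    have e2 : ⟪a - πK a, πK b - πK a⟫ = ⟪πK a - a, πK a - πK b⟫ := by
      rw [show πK b - πK a = -(πK a - πK b) from by abel,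
        show a - πK a = -(πK a - a) from by abel, inner_neg_neg]
    rw [e2] at a1
    have hCS : ⟪a - b, πK a - πK b⟫ ≤ ‖a - b‖ * ‖πK a - πK b‖ :=
      real_inner_le_norm _ _
    have hnpos : (0:ℝ) < ‖πK a - πK b‖ := norm_pos_iff.mpr (sub_ne_zero.mpr hne)
    have hsq : ‖πK a - πK b‖ ^ 2 ≤ ‖a - b‖ * ‖πK a - πK b‖ := by
      have hn := real_inner_self_eq_norm_sq (πK a - πK b)
      linarith [e, a1, a2, hCS]
    have hsq' : ‖πK a - πK b‖ * ‖πK a - πK b‖ ≤ ‖a - b‖ * ‖πK a - πK b‖ := by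
      calc ‖πK a - πK b‖ * ‖πK a - πK b‖ = ‖πK a - πK b‖ ^ 2 := (pow_two _).symm
        _ ≤ ‖a - b‖ * ‖πK a - πK b‖ := hsq
    exact le_of_mul_le_mul_right hsq' hnpos
  -- Banach fixed point for T x = πK (x - ρ • (L x - y))
  set T : EuclideanSpace ℝ (Fin q) → EuclideanSpace ℝ (Fin q) :=
    fun x => πK (x - ρ • (L x - y)) with hT_def
  have hTlip : ∀ x x', dist (T x) (T x') ≤ k * dist x x' := by
    intro x x'
    rw [dist_eq_norm, dist_eq_norm]
    calc ‖T x - T x'‖ ≤ ‖(x - ρ • (L x - y)) - (x' - ρ • (L x' - y))‖ :=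
          hnonexp _ _
      _ = ‖(x - x') - ρ • L (x - x')‖ := by
          congr 1
          rw [map_sub, smul_sub, smul_sub, smul_sub]
          abel
      _ ≤ k * ‖x - x'‖ := hcontr _
  have hlip : LipschitzWith (Real.toNNReal k) T :=
    LipschitzWith.of_dist_le_mul (by
      intro x x'
      rw [Real.coe_toNNReal k hk0]
      exact hTlip x x')
  have hcw : ContractingWith (Real.toNNReal k) T := by
    constructor
    · rw [show (1 : NNReal) = Real.toNNReal 1 from (Real.toNNReal_one).symm]
      exact (Real.toNNReal_lt_toNNReal_iff one_pos).mpr hk1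
    · exact hlip
  haveI : Nonempty (EuclideanSpace ℝ (Fin q)) := ⟨0⟩
  set x : EuclideanSpace ℝ (Fin q) := ContractingWith.fixedPoint T hcw with hx_def
  have hfix : T x = x := hcw.fixedPoint_isFixedPt
  have hxK : x ∈ K := by rw [← hfix]; exact (hπK _).1
  -- x solves the variational inequality
  have hvi : ∀ s ∈ K, ⟪(x - L x + y) - x, s - x⟫ ≤ 0 := by
    intro s hs
    have h0 := hproj (x - ρ • (L x - y)) s hs
    rw [hT_def] at hfix
    simp only at hfix
    rw [hfix] at h0
    have e : x - ρ • (L x - y) - x = -(ρ • (L x - y)) := by abel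
    rw [e, inner_neg_left, real_inner_smul_left] at h0
    have h1 : 0 ≤ ρ * ⟪L x - y, s - x⟫ := by linarith
    have h2 : 0 ≤ ⟪L x - y, s - x⟫ := nonneg_of_mul_nonneg_right h1 hρ
    have e2 : (x - L x + y) - x = -(L x - y) := by abel
    rw [e2, inner_neg_left]
    linarith
  have hproj_eq : πK (x - L x + y) = x := huniq _ x hxK hvi
  refine ⟨x - L x + y, ?_⟩
  simp only [hproj_eq]
  abel
end

section
/- Let f : R^q → R^m be locally Lipschitz. If the directional derivative f'(x_0; h) = lim_{t↓0} (f(x_0 + th) - f(x_0))/t exists for every direction h ∈ R^q, then f is B-differentiable at x_0: the map h ↦ f'(x_0; h) is positively homogeneous and continuous, and f(x_0 + v) = f(x_0) + f'(x_0; v) + o(‖v‖) as v → 0. -/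
open Filter Asymptotics

/-- let `f : ℝ^q → ℝ^m` be locally Lipschitz near `x₀`. If the
directional derivative `D h = lim_{t ↓ 0} (f(x₀ + t h) - f x₀)/t` exists for every
direction `h`, then `f` is B-differentiable at `x₀`: `D` is positively homogeneous
and continuous, and `f(x₀ + v) = f x₀ + D v + o(‖v‖)` as `v → 0` (in the Fréchet
sense). -/
theorem bdiff_of_locally_lipschitz_dirDeriv {q m : ℕ}
    (f : EuclideanSpace ℝ (Fin q) → EuclideanSpace ℝ (Fin m))
    (x₀ : EuclideanSpace ℝ (Fin q))
    (hLip : ∃ U ∈ nhds x₀, ∃ C : NNReal, LipschitzOnWith C f U)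
    (D : EuclideanSpace ℝ (Fin q) → EuclideanSpace ℝ (Fin m))
    (hD : ∀ h, Tendsto (fun t : ℝ => t⁻¹ • (f (x₀ + t • h) - f x₀))
      (nhdsWithin 0 (Set.Ioi 0)) (nhds (D h))) :
    (∀ c : ℝ, 0 ≤ c → ∀ h, D (c • h) = c • D h) ∧
    Continuous D ∧
    (fun v => f (x₀ + v) - f x₀ - D v) =o[nhds 0] fun v => v := by
  obtain ⟨U, hU, C, hL⟩ := hLip
  obtain ⟨r, hr, hball⟩ := Metric.mem_nhds_iff.mp hU
  -- D 0 = 0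
  have hD0 : D 0 = 0 := by
    have h1 := hD 0
    have heq : (fun t : ℝ => t⁻¹ • (f (x₀ + t • (0 : EuclideanSpace ℝ (Fin q))) - f x₀))
        = fun _ : ℝ => (0 : EuclideanSpace ℝ (Fin m)) := by
      funext t; simp
    rw [heq] at h1
    exact tendsto_nhds_unique h1 tendsto_const_nhds
  -- positive homogeneity
  have hhom : ∀ c : ℝ, 0 < c → ∀ h, D (c • h) = c • D h := by
    intro c hc h
    have hmap : Tendsto (fun t : ℝ => c * t) (nhdsWithin 0 (Set.Ioi 0))
        (nhdsWithin 0 (Set.Ioi 0)) := by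
      apply tendsto_nhdsWithin_of_tendsto_nhds_of_eventually_within
      · have : Tendsto (fun t : ℝ => c * t) (nhds 0) (nhds (c * 0)) :=
          (continuous_const.mul continuous_id).tendsto 0
        simpa using this.mono_left nhdsWithin_le_nhds
      · filter_upwards [self_mem_nhdsWithin] with t ht
        exact mul_pos hc ht
    have h2 := (((hD h).comp hmap).const_smul c)
    have h2' : Tendsto (fun t : ℝ => t⁻¹ • (f (x₀ + t • (c • h)) - f x₀))
        (nhdsWithin 0 (Set.Ioi 0)) (nhds (c • D h)) := by
      refine h2.congr fun t => ?_
      show c • ((c * t)⁻¹ • (f (x₀ + (c * t) • h) - f x₀)) = _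
      have harg : (c * t) • h = t • (c • h) := by rw [smul_smul, mul_comm]
      rw [harg, smul_smul, mul_inv, ← mul_assoc, mul_inv_cancel₀ hc.ne', one_mul]
    exact tendsto_nhds_unique (hD (c • h)) h2'
  -- D is Lipschitz with constant C
  have hDlip : ∀ a b, ‖D a - D b‖ ≤ (C : ℝ) * ‖a - b‖ := by
    intro a b
    set M := max ‖a‖ ‖b‖ with hMdef
    have hM : 0 ≤ M := le_max_of_le_left (norm_nonneg a)
    have hbnd : ∀ᶠ t in nhdsWithin (0 : ℝ) (Set.Ioi 0),
        ‖(t⁻¹ • (f (x₀ + t • a) - f x₀)) - (t⁻¹ • (f (x₀ + t • b) - f x₀))‖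
          ≤ (C : ℝ) * ‖a - b‖ := by
      have hmem : Set.Ioo (0 : ℝ) (r / (M + 1)) ∈ nhdsWithin (0 : ℝ) (Set.Ioi 0) :=
        Ioo_mem_nhdsGT_of_mem ⟨le_refl 0, by positivity⟩
      filter_upwards [hmem] with t ht
      obtain ⟨ht0, htr⟩ := ht
      have htr' : t * (M + 1) < r := (lt_div_iff₀ (by positivity)).mp htr
      have hin : ∀ z : EuclideanSpace ℝ (Fin q), ‖z‖ ≤ M → x₀ + t • z ∈ U := by
        intro z hz
        apply hball
        rw [Metric.mem_ball, dist_eq_norm, add_sub_cancel_left, norm_smul,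
          Real.norm_of_nonneg ht0.le]
        nlinarith
      have key : ‖f (x₀ + t • a) - f (x₀ + t • b)‖ ≤ (C : ℝ) * ‖t • a - t • b‖ := by
        have := hL.dist_le_mul _ (hin a (le_max_left _ _)) _ (hin b (le_max_right _ _))
        rw [dist_eq_norm, dist_eq_norm] at this
        simpa [add_sub_add_left_eq_sub] using this
      rw [← smul_sub, show (f (x₀ + t • a) - f x₀) - (f (x₀ + t • b) - f x₀)
          = f (x₀ + t • a) - f (x₀ + t • b) by abel,
        norm_smul, Real.norm_of_nonneg (inv_nonneg.mpr ht0.le)]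
      have hsm : ‖t • a - t • b‖ = t * ‖a - b‖ := by
        rw [← smul_sub, norm_smul, Real.norm_of_nonneg ht0.le]
      calc t⁻¹ * ‖f (x₀ + t • a) - f (x₀ + t • b)‖
          ≤ t⁻¹ * ((C : ℝ) * (t * ‖a - b‖)) := by
            apply mul_le_mul_of_nonneg_left _ (inv_nonneg.mpr ht0.le)
            rw [← hsm]; exact key
        _ = (C : ℝ) * ‖a - b‖ := by field_simp
    have hlim := ((hD a).sub (hD b)).norm
    exact le_of_tendsto hlim hbnd
  have hDcont : Continuous D := by
    have : LipschitzWith C D := by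
      apply LipschitzWith.of_dist_le_mul
      intro a b
      rw [dist_eq_norm, dist_eq_norm]
      exact hDlip a b
    exact this.continuous
  refine ⟨?_, hDcont, ?_⟩
  · intro c hc h
    rcases hc.eq_or_lt with hc0 | hc0
    · simp [← hc0, hD0]
    · exact hhom c hc0 h
  -- little-o part
  rw [isLittleO_iff]
  intro ε hε
  set δ : ℝ := ε / (3 * ((C : ℝ) + 1)) with hδdef
  have hδ : 0 < δ := by positivity
  have hcov : (Metric.sphere (0 : EuclideanSpace ℝ (Fin q)) 1)
      ⊆ ⋃ i : Metric.sphere (0 : EuclideanSpace ℝ (Fin q)) 1, Metric.ball (i : EuclideanSpace ℝ (Fin q)) δ := by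
    intro h hh
    exact Set.mem_iUnion.mpr ⟨⟨h, hh⟩, Metric.mem_ball_self hδ⟩
  obtain ⟨s, hs⟩ := (isCompact_sphere (0 : EuclideanSpace ℝ (Fin q)) 1).elim_finite_subcover
    (fun i : Metric.sphere (0 : EuclideanSpace ℝ (Fin q)) 1 =>
      Metric.ball (i : EuclideanSpace ℝ (Fin q)) δ)
    (fun _ => Metric.isOpen_ball) hcov
  have hev : ∀ᶠ t in nhdsWithin (0 : ℝ) (Set.Ioi 0),
      (t < r ∧ ∀ i ∈ s, ‖t⁻¹ • (f (x₀ + t • (i : EuclideanSpace ℝ (Fin q))) - f x₀)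
        - D (i : EuclideanSpace ℝ (Fin q))‖ < ε / 3) := by
    refine Filter.Eventually.and ?_ ?_
    · filter_upwards [Ioo_mem_nhdsGT_of_mem ⟨le_refl (0 : ℝ), hr⟩] with t ht using ht.2
    · rw [Filter.eventually_all_finset]
      intro i _
      have := Metric.tendsto_nhds.mp (hD (i : EuclideanSpace ℝ (Fin q))) (ε / 3) (by positivity)
      filter_upwards [this] with t ht
      rwa [dist_eq_norm] at ht
  obtain ⟨t₀, ht₀, hIoo⟩ := mem_nhdsGT_iff_exists_Ioo_subset.mp hev
  have ht₀pos : (0 : ℝ) < t₀ := ht₀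
  filter_upwards [Metric.ball_mem_nhds (0 : EuclideanSpace ℝ (Fin q)) ht₀pos] with v hv
  rcases eq_or_ne v 0 with rfl | hv0
  · simp [hD0]
  · set t := ‖v‖ with htdef
    have ht0 : 0 < t := norm_pos_iff.mpr hv0
    have htlt : t < t₀ := by
      rw [Metric.mem_ball, dist_eq_norm, sub_zero] at hv
      exact hv
    obtain ⟨htr, hall⟩ := hIoo ⟨ht0, htlt⟩
    set h : EuclideanSpace ℝ (Fin q) := t⁻¹ • v with hhdef
    have hnh : ‖h‖ = 1 := by
      rw [hhdef, norm_smul, Real.norm_of_nonneg (inv_nonneg.mpr ht0.le), ← htdef,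
        inv_mul_cancel₀ ht0.ne']
    have hhS : h ∈ Metric.sphere (0 : EuclideanSpace ℝ (Fin q)) 1 := by
      rw [mem_sphere_zero_iff_norm]; exact hnh
    obtain ⟨i, his, hhi⟩ := Set.mem_iUnion₂.mp (hs hhS)
    have hni : ‖(i : EuclideanSpace ℝ (Fin q))‖ = 1 := mem_sphere_zero_iff_norm.mp i.2
    have hhiδ : ‖h - (i : EuclideanSpace ℝ (Fin q))‖ < δ := by
      rw [Metric.mem_ball, dist_eq_norm] at hhi
      exact hhi
    have hv_eq : v = t • h := by
      rw [hhdef, smul_smul, mul_inv_cancel₀ ht0.ne', one_smul]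
    have hDv : D v = t • D h := by rw [hv_eq]; exact hhom t ht0 h
    -- three estimates
    have hinU : ∀ z : EuclideanSpace ℝ (Fin q), ‖z‖ = 1 → x₀ + t • z ∈ U := by
      intro z hz
      apply hball
      rw [Metric.mem_ball, dist_eq_norm, add_sub_cancel_left, norm_smul,
        Real.norm_of_nonneg ht0.le, hz, mul_one]
      exact htr
    have e1 : ‖f (x₀ + t • h) - f (x₀ + t • (i : EuclideanSpace ℝ (Fin q)))‖
        ≤ (C : ℝ) * (t * δ) := by
      have := hL.dist_le_mul _ (hinU h hnh) _ (hinU _ hni)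
      rw [dist_eq_norm, dist_eq_norm] at this
      calc ‖f (x₀ + t • h) - f (x₀ + t • (i : EuclideanSpace ℝ (Fin q)))‖
          ≤ (C : ℝ) * ‖(x₀ + t • h) - (x₀ + t • (i : EuclideanSpace ℝ (Fin q)))‖ := this
        _ = (C : ℝ) * (t * ‖h - (i : EuclideanSpace ℝ (Fin q))‖) := by
            rw [add_sub_add_left_eq_sub, ← smul_sub, norm_smul,
              Real.norm_of_nonneg ht0.le]
        _ ≤ (C : ℝ) * (t * δ) := by
            apply mul_le_mul_of_nonneg_left _ (C.coe_nonneg)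
            exact mul_le_mul_of_nonneg_left hhiδ.le ht0.le
    have e2 : ‖f (x₀ + t • (i : EuclideanSpace ℝ (Fin q))) - f x₀
        - t • D (i : EuclideanSpace ℝ (Fin q))‖ ≤ t * (ε / 3) := by
      have h3 := (hall i his).le
      have : f (x₀ + t • (i : EuclideanSpace ℝ (Fin q))) - f x₀
          - t • D (i : EuclideanSpace ℝ (Fin q))
          = t • (t⁻¹ • (f (x₀ + t • (i : EuclideanSpace ℝ (Fin q))) - f x₀)
            - D (i : EuclideanSpace ℝ (Fin q))) := by
        rw [smul_sub, smul_smul, mul_inv_cancel₀ ht0.ne', one_smul]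
      rw [this, norm_smul, Real.norm_of_nonneg ht0.le]
      exact mul_le_mul_of_nonneg_left h3 ht0.le
    have e3 : ‖t • D (i : EuclideanSpace ℝ (Fin q)) - t • D h‖ ≤ t * ((C : ℝ) * δ) := by
      rw [← smul_sub, norm_smul, Real.norm_of_nonneg ht0.le]
      apply mul_le_mul_of_nonneg_left _ ht0.le
      calc ‖D (i : EuclideanSpace ℝ (Fin q)) - D h‖
          ≤ (C : ℝ) * ‖(i : EuclideanSpace ℝ (Fin q)) - h‖ := hDlip _ _
        _ ≤ (C : ℝ) * δ := by
            apply mul_le_mul_of_nonneg_left _ (C.coe_nonneg)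
            rw [norm_sub_rev]; exact hhiδ.le
    have hsplit : f (x₀ + v) - f x₀ - D v
        = (f (x₀ + t • h) - f (x₀ + t • (i : EuclideanSpace ℝ (Fin q))))
          + (f (x₀ + t • (i : EuclideanSpace ℝ (Fin q))) - f x₀
            - t • D (i : EuclideanSpace ℝ (Fin q)))
          + (t • D (i : EuclideanSpace ℝ (Fin q)) - t • D h) := by
      rw [hDv, hv_eq]; abel
    have hCnn : (0 : ℝ) ≤ (C : ℝ) := C.coe_nonneg
    have hCδ : (C : ℝ) * δ ≤ ε / 3 := by
      rw [hδdef, mul_div_assoc', div_le_div_iff₀ (by positivity) (by norm_num : (0:ℝ) < 3)]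
      nlinarith
    calc ‖f (x₀ + v) - f x₀ - D v‖
        ≤ ‖f (x₀ + t • h) - f (x₀ + t • (i : EuclideanSpace ℝ (Fin q)))‖
          + ‖f (x₀ + t • (i : EuclideanSpace ℝ (Fin q))) - f x₀
            - t • D (i : EuclideanSpace ℝ (Fin q))‖
          + ‖t • D (i : EuclideanSpace ℝ (Fin q)) - t • D h‖ := by
          rw [hsplit]; exact norm_add₃_le
      _ ≤ (C : ℝ) * (t * δ) + t * (ε / 3) + t * ((C : ℝ) * δ) :=
          add_le_add (add_le_add e1 e2) e3
      _ ≤ t * (ε / 3) + t * (ε / 3) + t * (ε / 3) := by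
          refine add_le_add (add_le_add ?_ le_rfl) ?_
          · rw [show (C : ℝ) * (t * δ) = t * ((C : ℝ) * δ) by ring]
            exact mul_le_mul_of_nonneg_left hCδ ht0.le
          · exact mul_le_mul_of_nonneg_left hCδ ht0.le
      _ = ε * t := by ring
      _ = ε * ‖v‖ := by rw [htdef]
end
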